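/- arXiv:2409.19908 — 2 statements merged into one kernel-verified Lean document; each statement's English description precedes it below -/
import Mathlib

section
/- Every (r+1)-uniform hypergraph H on n vertices with maximum degree at most d ≥ 1 contains an independent set of size at least (1 - 1/r) · n / d^{1/r}. -/
/-!
Pick a random set `S` containing each vertex independently with probability `p = d^(-1/r)`,
then delete one vertex from every edge inside `S`. The expected size of what survives is at least
`n p - |E| p^(r+1)`, and double counting gives `|E| (r+1) ≤ d n`, so with `d p^r = 1` this is at
least `n p (1 - 1/(r+1)) ≥ (1 - 1/r) n p`.
-/

open Finset

theorem Finset.exists_card_le_forall_exists_mem {V : Type*} [DecidableEq V]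
    {E : Finset (Finset V)} (hE : ∀ e ∈ E, e.Nonempty) :
    ∃ T : Finset V, #T ≤ #E ∧ ∀ e ∈ E, ∃ v ∈ e, v ∈ T := by
  choose f hf using hE
  refine ⟨E.attach.image fun e => f e.1 e.2, card_image_le.trans_eq card_attach, ?_⟩
  exact fun e he => ⟨f e he, hf e he, mem_image_of_mem _ (mem_attach _ ⟨e, he⟩)⟩

theorem Finset.exists_subset_forall_not_subset_card_le_add {V : Type*} [DecidableEq V]
    {E : Finset (Finset V)} (hE : ∀ e ∈ E, e.Nonempty) (S : Finset V) :
    ∃ I ⊆ S, (∀ e ∈ E, ¬ e ⊆ I) ∧ #S ≤ #I + #{e ∈ E | e ⊆ S} := by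
  obtain ⟨T, hT, hhit⟩ := exists_card_le_forall_exists_mem (E := {e ∈ E | e ⊆ S})
    fun e he => hE e (mem_filter.1 he).1
  refine ⟨S \ T, sdiff_subset, fun e he heI => ?_,
    (card_le_card_sdiff_add_card (t := T)).trans (by omega)⟩
  obtain ⟨v, hve, hvT⟩ := hhit e (mem_filter.2 ⟨he, heI.trans sdiff_subset⟩)
  exact (mem_sdiff.1 (heI hve)).2 hvT

theorem Finset.card_mul_le_of_forall_card_eq {V : Type*} [Fintype V] [DecidableEq V]
    {E : Finset (Finset V)} {k : ℕ} {d : ℝ} (hk : ∀ e ∈ E, #e = k)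
    (hdeg : ∀ v : V, (#{e ∈ E | v ∈ e} : ℝ) ≤ d) :
    (#E : ℝ) * k ≤ d * Fintype.card V := by
  have hsum : ∑ e ∈ E, (#e : ℝ) = ∑ v, (#{e ∈ E | v ∈ e} : ℝ) := by
    simp_rw [card_eq_sum_ones, sum_filter]
    push_cast
    rw [sum_comm]
    simp
  calc (#E : ℝ) * k = ∑ e ∈ E, (#e : ℝ) := by
        rw [sum_congr rfl fun e he => by rw [hk e he]]; simp [mul_comm]
    _ ≤ ∑ _v : V, d := hsum ▸ sum_le_sum fun v _ => hdeg v
    _ = d * Fintype.card V := by simp [mul_comm]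

section RandomSubset

variable {V : Type*} [Fintype V]

/-- The probability that a `p`-random subset of `V` (each vertex chosen independently with
probability `p`) is exactly `S`. -/
def subsetWeight (p : ℝ) (S : Finset V) : ℝ :=
  p ^ #S * (1 - p) ^ (Fintype.card V - #S)

theorem subsetWeight_nonneg {p : ℝ} (hp₀ : 0 ≤ p) (hp₁ : p ≤ 1) (S : Finset V) :
    0 ≤ subsetWeight p S :=
  mul_nonneg (pow_nonneg hp₀ _) (pow_nonneg (sub_nonneg.2 hp₁) _)

theorem sum_subsetWeight (p : ℝ) : ∑ S : Finset V, subsetWeight p S = 1 := by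
  simp [subsetWeight, Fintype.sum_pow_mul_eq_add_pow]

theorem sum_subsetWeight_superset [DecidableEq V] (p : ℝ) (A : Finset V) :
    ∑ S with A ⊆ S, subsetWeight p S = p ^ #A := by
  have hdisj {T : Finset V} (hT : T ⊆ Aᶜ) : Disjoint A T := disjoint_compl_right.mono_right hT
  have hunion (T : Finset V) (hT : T ⊆ Aᶜ) :
      subsetWeight p (A ∪ T) = p ^ #A * (p ^ #T * (1 - p) ^ (#Aᶜ - #T)) := by
    rw [subsetWeight, card_union_of_disjoint (hdisj hT), card_compl, pow_add, mul_assoc,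
      Nat.sub_sub]
  calc ∑ S with A ⊆ S, subsetWeight p S
        = ∑ T ∈ Aᶜ.powerset, subsetWeight p (A ∪ T) := by
        refine sum_nbij' (· \ A) (A ∪ ·) ?_ ?_ ?_ ?_ fun S hS => ?_
        · intro S _; simp [sdiff_eq_inter_compl]
        · intro T _; simp
        · intro S hS; exact union_sdiff_of_subset (mem_filter.1 hS).2
        · intro T hT; exact union_sdiff_cancel_left (hdisj (mem_powerset.1 hT))
        · rw [union_sdiff_of_subset (mem_filter.1 hS).2]
    _ = p ^ #A := by
        rw [sum_congr rfl fun T hT => hunion T (mem_powerset.1 hT), ← mul_sum,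
          sum_pow_mul_eq_add_pow]
        simp

theorem sum_subsetWeight_mul_card_filter_subset [DecidableEq V] {ι : Type*} (p : ℝ)
    (s : Finset ι) (f : ι → Finset V) :
    ∑ S, subsetWeight p S * #{i ∈ s | f i ⊆ S} = ∑ i ∈ s, p ^ #(f i) := by
  simp_rw [card_eq_sum_ones, sum_filter]
  push_cast
  simp_rw [mul_sum]
  rw [sum_comm]
  refine sum_congr rfl fun i _ => ?_
  simp [← sum_subsetWeight_superset p (f i), sum_filter]

theorem exists_le_of_sum_subsetWeight_mul {p : ℝ} (hp₀ : 0 ≤ p) (hp₁ : p ≤ 1)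
    (X : Finset V → ℝ) : ∃ S, ∑ T, subsetWeight p T * X T ≤ X S := by
  obtain ⟨S, -, hS⟩ := (convexOn_id (𝕜 := ℝ) convex_univ).exists_ge_of_centerMass
    (fun T _ => subsetWeight_nonneg hp₀ hp₁ T) (by rw [sum_subsetWeight]; exact one_pos)
    (p := X) fun _ _ => Set.mem_univ _
  refine ⟨S, ?_⟩
  simpa [centerMass_eq_of_sum_1 _ _ (sum_subsetWeight p)] using hS

theorem sum_subsetWeight_mul_card [DecidableEq V] (p : ℝ) :
    ∑ S : Finset V, subsetWeight p S * #S = Fintype.card V * p := by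
  have h := sum_subsetWeight_mul_card_filter_subset p univ ({·} : V → Finset V)
  simp only [singleton_subset_iff, filter_univ_mem, card_singleton, pow_one, sum_const,
    card_univ, nsmul_eq_mul] at h
  exact h

theorem exists_card_sub_card_filter_subset_ge [DecidableEq V] {p : ℝ} (hp₀ : 0 ≤ p)
    (hp₁ : p ≤ 1) (E : Finset (Finset V)) :
    ∃ S : Finset V, Fintype.card V * p - ∑ e ∈ E, p ^ #e ≤ #S - #{e ∈ E | e ⊆ S} := by
  obtain ⟨S, hS⟩ :=
    exists_le_of_sum_subsetWeight_mul hp₀ hp₁ fun S => (#S : ℝ) - #{e ∈ E | e ⊆ S}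
  refine ⟨S, le_of_eq_of_le ?_ hS⟩
  simp only [mul_sub, sum_sub_distrib, sum_subsetWeight_mul_card]
  exact congrArg _ (sum_subsetWeight_mul_card_filter_subset p E id).symm

theorem exists_forall_not_subset_card_ge [DecidableEq V] {p : ℝ} (hp₀ : 0 ≤ p)
    (hp₁ : p ≤ 1) {E : Finset (Finset V)} (hE : ∀ e ∈ E, e.Nonempty) :
    ∃ I : Finset V, (∀ e ∈ E, ¬ e ⊆ I) ∧
      Fintype.card V * p - ∑ e ∈ E, p ^ #e ≤ #I := by
  obtain ⟨S, hS⟩ := exists_card_sub_card_filter_subset_ge hp₀ hp₁ E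
  obtain ⟨I, -, hI, hSI⟩ := exists_subset_forall_not_subset_card_le_add hE S
  refine ⟨I, hI, hS.trans ?_⟩
  rw [sub_le_iff_le_add]
  exact_mod_cast hSI

end RandomSubset

/-- Every (r+1)-uniform hypergraph on n vertices with maximum degree at most d ≥ 1
contains an independent set of size at least (1 - 1/r) · n / d^(1/r). -/
theorem stmt_0 {V : Type*} [Fintype V] [DecidableEq V]
    (r : ℕ) (hr : 1 ≤ r) (d : ℝ) (hd : 1 ≤ d)
    (E : Finset (Finset V))
    (huniform : ∀ e ∈ E, e.card = r + 1)
    (hdeg : ∀ v : V, ((E.filter (fun e => v ∈ e)).card : ℝ) ≤ d) :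
    ∃ I : Finset V, (∀ e ∈ E, ¬ e ⊆ I) ∧
      (1 - 1 / (r : ℝ)) * (Fintype.card V : ℝ) / d ^ ((1 : ℝ) / r) ≤ (I.card : ℝ) := by
  set n : ℝ := (Fintype.card V : ℝ)
  set p := (d ^ ((1 : ℝ) / r))⁻¹
  have hp₀ : 0 ≤ p := inv_nonneg.2 (by positivity)
  have hp₁ : p ≤ 1 := inv_le_one_of_one_le₀ (Real.one_le_rpow hd (by positivity))
  have hdp : d * p ^ r = 1 := by
    rw [inv_pow, one_div, Real.rpow_inv_natCast_pow (by linarith) (by omega),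
      mul_inv_cancel₀ (by linarith)]
  obtain ⟨I, hI, hIcard⟩ := exists_forall_not_subset_card_ge hp₀ hp₁ (E := E)
    fun e he => card_pos.1 (by rw [huniform e he]; omega)
  refine ⟨I, hI, ?_⟩
  have hE : (#E : ℝ) * (r + 1) ≤ d * n := by
    exact_mod_cast card_mul_le_of_forall_card_eq huniform hdeg
  have hEp : ∑ e ∈ E, p ^ #e = #E * p ^ (r + 1) := by
    rw [sum_congr rfl fun e he => congrArg (p ^ ·) (huniform e he), sum_const, nsmul_eq_mul]
  calc (1 - 1 / (r : ℝ)) * n / d ^ ((1 : ℝ) / r) = (1 - 1 / (r : ℝ)) * (n * p) := by ring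
    _ ≤ (1 - 1 / (r + 1)) * (n * p) := by gcongr; linarith
    _ = n * p - d * n * p ^ (r + 1) / (r + 1) := by
        rw [show d * n * p ^ (r + 1) = n * p by linear_combination n * p * hdp]
        field_simp
    _ ≤ n * p - #E * p ^ (r + 1) := by
        rw [sub_le_sub_iff_left, le_div_iff₀ (by positivity)]
        linarith [mul_le_mul_of_nonneg_right hE (pow_nonneg hp₀ (r + 1))]
    _ ≤ #I := hEp ▸ hIcard
end

section
/- If H is an (r+1)-uniform locally sparse hypergraph (no 2-cycles or 3-cycles), v is a vertex, I is an independent set, I_v = I ∖ (N(v) ∪ {v}), and e, f are distinct edges containing v with subsets S ⊆ e∖{v} and T ⊆ f∖{v} such that I_v ∪ S and I_v ∪ T are both independent, then I_v ∪ S ∪ T is independent. -/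
/-!
An edge `g ⊆ I_v ∪ S ∪ T` that is contained in neither `I_v ∪ S` nor `I_v ∪ T`
contains some `s ∈ S ⊆ e ∖ {v}` and some `t ∈ T ⊆ f ∖ {v}`. If `g` is `e` or `f`, or `s = t`,
then `e` and `f` share `v` and a second vertex, a 2-cycle; otherwise `e, g, f` with the
vertices `s, t, v` form a 3-cycle.
-/

/-- A k-cycle in a hypergraph: distinct edges e_0, …, e_{k-1} and distinct vertices
v_0, …, v_{k-1} with v_i ∈ e_i ∩ e_{i+1} (indices mod k). -/
def HasCycle {V : Type*} (E : Finset (Finset V)) (k : ℕ) [NeZero k] : Prop :=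
  ∃ e : Fin k → Finset V, (∀ i, e i ∈ E) ∧ Function.Injective e ∧
    ∃ v : Fin k → V, Function.Injective v ∧ ∀ i, v i ∈ e i ∧ v i ∈ e (i + 1)

section Hypergraph

variable {V : Type*} {E : Finset (Finset V)}

theorem hasCycle_two_of_mem {a b : Finset V} (ha : a ∈ E) (hb : b ∈ E) (hab : a ≠ b)
    {x y : V} (hxy : x ≠ y) (hxa : x ∈ a) (hxb : x ∈ b) (hya : y ∈ a) (hyb : y ∈ b) :
    HasCycle E 2 := by
  refine ⟨![a, b], ?_, ?_, ![x, y], ?_, ?_⟩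
  · intro i; fin_cases i <;> assumption
  · intro i j h; fin_cases i <;> fin_cases j <;> simp_all
  · intro i j h; fin_cases i <;> fin_cases j <;> simp_all
  · intro i; fin_cases i
    exacts [⟨hxa, hxb⟩, ⟨hyb, hya⟩]

theorem hasCycle_three_of_mem {a b c : Finset V} (ha : a ∈ E) (hb : b ∈ E) (hc : c ∈ E)
    (hab : a ≠ b) (hbc : b ≠ c) (hac : a ≠ c) {x y z : V} (hxy : x ≠ y) (hyz : y ≠ z)
    (hxz : x ≠ z) (hxa : x ∈ a) (hxb : x ∈ b) (hyb : y ∈ b) (hyc : y ∈ c) (hzc : z ∈ c)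
    (hza : z ∈ a) :
    HasCycle E 3 := by
  refine ⟨![a, b, c], ?_, ?_, ![x, y, z], ?_, ?_⟩
  · intro i; fin_cases i <;> assumption
  · intro i j h; fin_cases i <;> fin_cases j <;> simp_all
  · intro i j h; fin_cases i <;> fin_cases j <;> simp_all
  · intro i; fin_cases i
    exacts [⟨hxa, hxb⟩, ⟨hyb, hyc⟩, ⟨hzc, hza⟩]

theorem notMem_of_mem_erase_of_mem_erase [DecidableEq V]
    (hsparse : ¬ HasCycle E 2 ∧ ¬ HasCycle E 3) {e f g : Finset V} (he : e ∈ E) (hf : f ∈ E)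
    (hg : g ∈ E) (hef : e ≠ f) {v s t : V} (hve : v ∈ e) (hvf : v ∈ f) (hs : s ∈ e.erase v)
    (ht : t ∈ f.erase v) (hsg : s ∈ g) : t ∉ g := by
  intro htg
  obtain ⟨hsv, hse⟩ := Finset.mem_erase.1 hs
  obtain ⟨htv, htf⟩ := Finset.mem_erase.1 ht
  by_cases hge : g = e
  · subst hge
    exact hsparse.1 (hasCycle_two_of_mem hg hf hef htv htg htf hve hvf)
  by_cases hgf : g = f
  · subst hgf
    exact hsparse.1 (hasCycle_two_of_mem he hg hef hsv hse hsg hve hvf)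
  by_cases hst : s = t
  · subst hst
    exact hsparse.1 (hasCycle_two_of_mem he hf hef hsv hse htf hve hvf)
  · exact hsparse.2 (hasCycle_three_of_mem he hg hf (Ne.symm hge) hgf hef hst htv hsv
      hse hsg htg htf hvf hve)

end Hypergraph

theorem stmt_3_general {V : Type*} [DecidableEq V]
    (E : Finset (Finset V))
    (hsparse : ¬ HasCycle E 2 ∧ ¬ HasCycle E 3)
    (v : V)
    (Iv : Set V)
    (e f : Finset V) (he : e ∈ E) (hf : f ∈ E) (hef : e ≠ f)
    (hve : v ∈ e) (hvf : v ∈ f)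
    (S T : Finset V) (hS : S ⊆ e.erase v) (hT : T ⊆ f.erase v)
    (hIS : ∀ g ∈ E, ¬ ↑g ⊆ Iv ∪ ↑S)
    (hIT : ∀ g ∈ E, ¬ ↑g ⊆ Iv ∪ ↑T) :
    ∀ g ∈ E, ¬ ↑g ⊆ Iv ∪ ↑S ∪ ↑T := by
  intro g hg hsub
  obtain ⟨t, htg, htIS⟩ := Set.not_subset.1 (hIS g hg)
  have htT : t ∈ T := (hsub htg).resolve_left htIS
  have hsub' : ↑g ⊆ Iv ∪ ↑T ∪ ↑S := Set.union_right_comm Iv (S : Set V) T ▸ hsub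
  obtain ⟨s, hsg, hsIT⟩ := Set.not_subset.1 (hIT g hg)
  have hsS : s ∈ S := (hsub' hsg).resolve_left hsIT
  exact notMem_of_mem_erase_of_mem_erase hsparse he hf hg hef hve hvf (hS hsS) (hT htT) hsg htg

/-- In a locally sparse (r+1)-uniform hypergraph, if S ⊆ e∖{v}, T ⊆ f∖{v} for distinct
edges e, f through v, and I_v ∪ S, I_v ∪ T are independent, so is I_v ∪ S ∪ T. -/
theorem stmt_3 {V : Type*} [DecidableEq V]
    (r : ℕ) (E : Finset (Finset V))
    (huniform : ∀ e ∈ E, e.card = r + 1)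
    (hsparse : ¬ HasCycle E 2 ∧ ¬ HasCycle E 3)
    (v : V) (I : Set V)
    (hI : ∀ g ∈ E, ¬ ↑g ⊆ I)
    (Iv : Set V)
    (hIv : Iv = I \ ({u : V | ∃ g ∈ E, v ∈ g ∧ u ∈ g ∧ u ≠ v} ∪ {v}))
    (e f : Finset V) (he : e ∈ E) (hf : f ∈ E) (hef : e ≠ f)
    (hve : v ∈ e) (hvf : v ∈ f)
    (S T : Finset V) (hS : S ⊆ e.erase v) (hT : T ⊆ f.erase v)
    (hIS : ∀ g ∈ E, ¬ ↑g ⊆ Iv ∪ ↑S)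
    (hIT : ∀ g ∈ E, ¬ ↑g ⊆ Iv ∪ ↑T) :
    ∀ g ∈ E, ¬ ↑g ⊆ Iv ∪ ↑S ∪ ↑T :=
  stmt_3_general E hsparse v Iv e f he hf hef hve hvf S T hS hT hIS hIT
end
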